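/- arXiv:2210.02319 — 3 statements merged into one kernel-verified Lean document; each statement's English description precedes it below -/
import Mathlib

section
/- If the series ∑_{n=0}^{∞} c_n converges, then for every integer i ≥ 0 the probability of eventual absorption is μ_i({ω ∈ ℤ^ℕ : ∃ n ∈ ℕ, ω_n = −1}) = (∑_{n=i}^{∞} c_n) / (1 + ∑_{n=0}^{∞} c_n); in particular absorption is transient, i.e. this probability is strictly less than 1. -/
open MeasureTheory

/-- Transition probabilities of the absorbing birth-death chain on `ℤ`:
for `i ≥ 0`, move to `i+1` with probability `p i` and to `i-1` with probability `q i`;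
every `i < 0` is absorbing. -/
noncomputable def bdKernel (p q : ℕ → ℝ) : ℤ → ℤ → ℝ := fun i j =>
  if 0 ≤ i then
    (if j = i + 1 then p i.toNat else if j = i - 1 then q i.toNat else 0)
  else
    (if j = i then 1 else 0)

/-- `μ i` is the law (on path space, obtained via Ionescu–Tulcea) of the absorbing
birth-death chain started at `i`, characterised by its finite-dimensional (cylinder)
distributions. -/
def IsBDLaw (p q : ℕ → ℝ) (μ : ℤ → Measure (ℕ → ℤ)) : Prop :=
  ∀ (i : ℤ) (n : ℕ) (f : ℕ → ℤ),
    μ i {ω : ℕ → ℤ | ∀ m ≤ n, ω m = f m} =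
      ENNReal.ofReal ((if f 0 = i then (1 : ℝ) else 0) *
        ∏ m ∈ Finset.range n, bdKernel p q (f m) (f (m + 1)))

/-- `cseq p q n = ∏_{j=0}^{n} q_j / p_j`. -/
noncomputable def cseq (p q : ℕ → ℝ) (n : ℕ) : ℝ :=
  ∏ j ∈ Finset.range (n + 1), q j / p j

/-!
Conditioning on the first step (the Markov property, checked on cylinder sets) shows that
`h i = μ_i(hit -1)` solves `h k = p_k h (k+1) + q_k h (k-1)` for `k ≥ 0`, with `h (-1) = 1`.
Such solutions satisfy `h k - h (k-1) = ρ_k (h 0 - h (-1))` with `ρ_k = ∏_{j<k} q_j/p_j`, so they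
form the one-parameter family `1 + a ∑_{j ≤ k} ρ_j`. Nonnegativity of `h` forces
`a ≥ -1 / ∑ ρ`. Conversely, by induction on `N`, the probability of hitting `-1` before time `N`
is dominated by every nonnegative solution equal to `1` on the negative states, in particular by
the one with `a = -1 / ∑ ρ`. Hence `h k = ∑_{j > k} ρ_j / ∑_j ρ_j`, which is `< 1` as `ρ_0 = 1`.
-/

section PathSpace

open Set MeasurableSpace

variable {α : Type*}

def pathCons (a : α) (ω : ℕ → α) : ℕ → α
  | 0 => a
  | n + 1 => ω n

@[simp] lemma pathCons_zero (a : α) (ω : ℕ → α) : pathCons a ω 0 = a := rfl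

def initialCylinder (f : ℕ → α) (n : ℕ) : Set (ℕ → α) := {ω | ∀ m ≤ n, ω m = f m}

lemma initialCylinder_inter_eq_right {f g : ℕ → α} {n m : ℕ} (hnm : n ≤ m)
    (hne : (initialCylinder f n ∩ initialCylinder g m).Nonempty) :
    initialCylinder f n ∩ initialCylinder g m = initialCylinder g m := by
  obtain ⟨ω, hωf, hωg⟩ := hne
  refine inter_eq_right.2 fun ω' hω' k hk => ?_
  rw [hω' k (hk.trans hnm), ← hωg k (hk.trans hnm), hωf k hk]

lemma isPiSystem_initialCylinders :
    IsPiSystem (range fun x : (ℕ → α) × ℕ => initialCylinder x.1 x.2) := by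
  rintro _ ⟨⟨f, n⟩, rfl⟩ _ ⟨⟨g, m⟩, rfl⟩ hne
  rcases le_total n m with hnm | hmn
  · exact ⟨(g, m), (initialCylinder_inter_eq_right hnm hne).symm⟩
  · rw [inter_comm] at hne ⊢
    exact ⟨(f, n), (initialCylinder_inter_eq_right hmn hne).symm⟩

lemma pathCons_preimage_initialCylinder_zero (a : α) (f : ℕ → α) :
    pathCons a ⁻¹' initialCylinder f 0 = {_ω | a = f 0} := by
  ext ω
  simp [initialCylinder]

lemma pathCons_preimage_initialCylinder_succ (a : α) (f : ℕ → α) (n : ℕ) :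
    pathCons a ⁻¹' initialCylinder f (n + 1) =
      {_ω | a = f 0} ∩ initialCylinder (fun m => f (m + 1)) n := by
  ext ω
  simp only [initialCylinder, mem_preimage, mem_ofPred_eq, mem_inter_iff]
  constructor
  · intro h
    exact ⟨h 0 (Nat.zero_le _), fun m hm => h (m + 1) (by omega)⟩
  · rintro ⟨h0, h⟩ (_ | m) hm
    exacts [h0, h m (by omega)]

lemma pathCons_preimage_setOf_exists_eq {a z : α} (haz : a ≠ z) :
    pathCons a ⁻¹' {ω | ∃ n, ω n = z} = {ω | ∃ n, ω n = z} := by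
  ext ω
  refine ⟨?_, fun ⟨n, hn⟩ => ⟨n + 1, hn⟩⟩
  rintro ⟨_ | n, hn⟩
  exacts [absurd hn haz, ⟨n, hn⟩]

lemma pathCons_preimage_setOf_exists_le_eq {a z : α} (haz : a ≠ z) (N : ℕ) :
    pathCons a ⁻¹' {ω | ∃ n ≤ N + 1, ω n = z} = {ω | ∃ n ≤ N, ω n = z} := by
  ext ω
  refine ⟨?_, fun ⟨n, hn, hωn⟩ => ⟨n + 1, by omega, hωn⟩⟩
  rintro ⟨_ | n, hn, hωn⟩
  exacts [absurd hωn haz, ⟨n, by omega, hωn⟩]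

lemma setOf_exists_eq_iUnion (z : α) :
    {ω : ℕ → α | ∃ n, ω n = z} = ⋃ N, {ω | ∃ n ≤ N, ω n = z} := by
  ext ω
  simp only [mem_ofPred_eq, mem_iUnion]
  exact ⟨fun ⟨n, hn⟩ => ⟨n, n, le_rfl, hn⟩, fun ⟨_, n, _, hn⟩ => ⟨n, hn⟩⟩

variable [MeasurableSpace α]

lemma measurable_pathCons (a : α) : Measurable (pathCons a) :=
  measurable_pi_iff.2 fun n => by
    cases n with
    | zero => exact measurable_const
    | succ n => exact measurable_pi_apply n

variable [MeasurableSingletonClass α]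

lemma measurableSet_initialCylinder (f : ℕ → α) (n : ℕ) :
    MeasurableSet (initialCylinder f n) := by
  simp only [initialCylinder, ofPred_forall]
  exact .iInter fun m => .iInter fun _ => measurable_pi_apply m (measurableSet_singleton _)

lemma measurableSet_setOf_exists_le_eq (z : α) (N : ℕ) :
    MeasurableSet {ω : ℕ → α | ∃ n ≤ N, ω n = z} := by
  simp only [ofPred_exists]
  exact .iUnion fun n => (MeasurableSet.const (n ≤ N)).inter
    ((measurableSet_singleton z).preimage (measurable_pi_apply n))

lemma measurableSet_setOf_exists_eq (z : α) : MeasurableSet {ω : ℕ → α | ∃ n, ω n = z} := by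
  rw [setOf_exists_eq_iUnion]
  exact .iUnion (measurableSet_setOf_exists_le_eq z)

lemma generateFrom_initialCylinders [Countable α] :
    generateFrom (range fun x : (ℕ → α) × ℕ => initialCylinder x.1 x.2) = MeasurableSpace.pi := by
  refine le_antisymm (generateFrom_le ?_) (iSup_le fun m => ?_)
  · rintro _ ⟨⟨f, n⟩, rfl⟩
    exact measurableSet_initialCylinder f n
  refine measurable_iff_comap_le.1
    (@measurable_to_countable' _ _ _ _ (generateFrom _) _ fun z => ?_)
  have hunion : (fun ω : ℕ → α => ω m) ⁻¹' {z} =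
      ⋃ v : Fin m → α, initialCylinder (fun k => if h : k < m then v ⟨k, h⟩ else z) m := by
    ext ω
    simp only [mem_preimage, mem_singleton_iff, mem_iUnion, initialCylinder, mem_ofPred_eq]
    constructor
    · rintro rfl
      refine ⟨fun k => ω k, fun k hk => ?_⟩
      split_ifs with h
      · rfl
      · rw [show k = m by omega]
    · rintro ⟨v, hv⟩
      simpa using hv m le_rfl
  rw [hunion]
  exact .iUnion fun v => measurableSet_generateFrom ⟨(_, m), rfl⟩

end PathSpace

section Markov

open Set

variable {p q : ℕ → ℝ} {μ : ℤ → Measure (ℕ → ℤ)}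

lemma bdKernel_natCast (k : ℕ) (j : ℤ) :
    bdKernel p q k j = if j = k + 1 then p k else if j = k - 1 then q k else 0 := by
  simp [bdKernel]

lemma IsBDLaw.measure_initialCylinder (hlaw : IsBDLaw p q μ) (i : ℤ) (f : ℕ → ℤ) (n : ℕ) :
    μ i (initialCylinder f n) = ENNReal.ofReal ((if f 0 = i then (1 : ℝ) else 0) *
      ∏ m ∈ Finset.range n, bdKernel p q (f m) (f (m + 1))) :=
  hlaw i n f

lemma bdKernel_nonneg (hp : ∀ k, 0 ≤ p k) (hq : ∀ k, 0 ≤ q k) (i j : ℤ) :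
    0 ≤ bdKernel p q i j := by
  unfold bdKernel
  split_ifs <;> simp [hp, hq]

theorem IsBDLaw.eq_add_map_pathCons (hp : ∀ k, 0 ≤ p k) (hq : ∀ k, 0 ≤ q k)
    (hpq : ∀ k, p k + q k = 1) (hμ : ∀ i, IsProbabilityMeasure (μ i)) (hlaw : IsBDLaw p q μ)
    (k : ℕ) :
    μ k = ENNReal.ofReal (p k) • (μ (k + 1)).map (pathCons (k : ℤ)) +
      ENNReal.ofReal (q k) • (μ (k - 1)).map (pathCons (k : ℤ)) := by
  have hsum : ENNReal.ofReal (p k) + ENNReal.ofReal (q k) = 1 := by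
    rw [← ENNReal.ofReal_add (hp k) (hq k), hpq k, ENNReal.ofReal_one]
  refine ext_of_generate_finite _ generateFrom_initialCylinders.symm
    isPiSystem_initialCylinders ?_ ?_
  · rintro _ ⟨⟨f, n⟩, rfl⟩
    simp only [Measure.add_apply, Measure.smul_apply, smul_eq_mul,
      Measure.map_apply (measurable_pathCons _) (measurableSet_initialCylinder f n)]
    cases n with
    | zero =>
      simp only [pathCons_preimage_initialCylinder_zero, hlaw.measure_initialCylinder,
        Finset.prod_range_zero, mul_one]
      by_cases h : f 0 = k
      · simp [h, hsum]
      · simp [h, Ne.symm h]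
    | succ n =>
      by_cases h : f 0 = k
      · have hP := Finset.prod_nonneg fun m (_ : m ∈ Finset.range n) =>
          bdKernel_nonneg hp hq (f (m + 1)) (f (m + 1 + 1))
        simp only [pathCons_preimage_initialCylinder_succ, h, ofPred_true, univ_inter,
          hlaw.measure_initialCylinder, Finset.prod_range_succ', bdKernel_natCast]
        split_ifs <;> first | omega | simp_all [ENNReal.ofReal_mul, mul_comm]
      · simp [pathCons_preimage_initialCylinder_succ, hlaw.measure_initialCylinder, h, Ne.symm h]
  · simp [Measure.map_apply (measurable_pathCons _) MeasurableSet.univ, hsum]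

end Markov

section Harmonic

variable {p q : ℕ → ℝ}

noncomputable def rho (p q : ℕ → ℝ) (k : ℕ) : ℝ := ∏ j ∈ Finset.range k, q j / p j

@[simp] lemma rho_zero : rho p q 0 = 1 := rfl

lemma rho_nonneg (hp : ∀ k, 0 ≤ p k) (hq : ∀ k, 0 ≤ q k) (k : ℕ) : 0 ≤ rho p q k :=
  Finset.prod_nonneg fun j _ => div_nonneg (hq j) (hp j)

lemma mul_rho_succ {k : ℕ} (hpk : p k ≠ 0) : p k * rho p q (k + 1) = q k * rho p q k := by
  rw [rho, rho, Finset.prod_range_succ]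
  field_simp

def IsBDHarmonic (p q : ℕ → ℝ) (h : ℤ → ℝ) : Prop :=
  ∀ k : ℕ, h k = p k * h (k + 1) + q k * h (k - 1)

lemma isBDHarmonic_iff (hpq : ∀ k, p k + q k = 1) {h : ℤ → ℝ} :
    IsBDHarmonic p q h ↔ ∀ k : ℕ, p k * (h (k + 1) - h k) = q k * (h k - h (k - 1)) := by
  refine forall_congr' fun k => ⟨fun hk => ?_, fun hk => ?_⟩ <;>
    linear_combination -hk - h k * hpq k

lemma isBDHarmonic_of_sub_eq (hp : ∀ k, p k ≠ 0) (hpq : ∀ k, p k + q k = 1) {h : ℤ → ℝ} {a : ℝ}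
    (h_sub : ∀ k : ℕ, h k - h (k - 1) = rho p q k * a) : IsBDHarmonic p q h := by
  refine (isBDHarmonic_iff hpq).2 fun k => ?_
  have hk1 := h_sub (k + 1)
  push_cast at hk1
  rw [add_sub_cancel_right] at hk1
  rw [hk1, h_sub k, ← mul_assoc, mul_rho_succ (hp k), mul_assoc]

lemma IsBDHarmonic.sub_eq (hp : ∀ k, p k ≠ 0) (hpq : ∀ k, p k + q k = 1) {h : ℤ → ℝ}
    (hh : IsBDHarmonic p q h) (k : ℕ) : h k - h (k - 1) = rho p q k * (h 0 - h (-1)) := by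
  induction k with
  | zero => simp
  | succ k ih =>
    push_cast
    rw [add_sub_cancel_right]
    refine mul_left_cancel₀ (hp k) ?_
    rw [(isBDHarmonic_iff hpq).1 hh k, ih, ← mul_assoc, ← mul_assoc, mul_rho_succ (hp k)]

lemma eq_add_mul_sum_of_sub_eq {h : ℤ → ℝ} {a : ℝ}
    (h_sub : ∀ k : ℕ, h k - h (k - 1) = rho p q k * a) (k : ℕ) :
    h k = h (-1) + a * ∑ j ∈ Finset.range (k + 1), rho p q j := by
  induction k with
  | zero =>
    have h0 := h_sub 0
    simp only [Nat.cast_zero, zero_sub, rho_zero, one_mul] at h0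
    simp [← h0]
  | succ k ih =>
    have hk1 := h_sub (k + 1)
    push_cast at hk1 ⊢
    rw [add_sub_cancel_right] at hk1
    rw [Finset.sum_range_succ]
    linear_combination ih + hk1

end Harmonic

section MinimalSolution

variable {p q : ℕ → ℝ}

/-- Since `(i + 1).toNat = 0` for `i < 0`, this is `1` at every negative state. -/
noncomputable def absorptionProb (p q : ℕ → ℝ) (i : ℤ) : ℝ :=
  1 - (∑ j ∈ Finset.range (i + 1).toNat, rho p q j) / ∑' j, rho p q j

lemma absorptionProb_of_neg {i : ℤ} (hi : i < 0) : absorptionProb p q i = 1 := by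
  simp [absorptionProb, Int.toNat_eq_zero.2 (by omega : i + 1 ≤ 0)]

lemma absorptionProb_sub (k : ℕ) :
    absorptionProb p q k - absorptionProb p q (k - 1) =
      rho p q k * -(∑' j, rho p q j)⁻¹ := by
  have h1 : ((k : ℤ) + 1).toNat = k + 1 := by omega
  have h2 : ((k : ℤ) - 1 + 1).toNat = k := by omega
  rw [absorptionProb, absorptionProb, h1, h2, Finset.sum_range_succ]
  ring

lemma isBDHarmonic_absorptionProb (hp : ∀ k, p k ≠ 0) (hpq : ∀ k, p k + q k = 1) :
    IsBDHarmonic p q (absorptionProb p q) :=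
  isBDHarmonic_of_sub_eq hp hpq absorptionProb_sub

variable (hp : ∀ k, 0 ≤ p k) (hq : ∀ k, 0 ≤ q k) (hρ : Summable (rho p q))
include hp hq hρ

lemma one_le_tsum_rho : 1 ≤ ∑' j, rho p q j := by
  simpa using hρ.sum_le_tsum {0} fun j _ => rho_nonneg hp hq j

lemma absorptionProb_nonneg (i : ℤ) : 0 ≤ absorptionProb p q i := by
  have hD := one_le_tsum_rho hp hq hρ
  rw [absorptionProb, sub_nonneg, div_le_one (by linarith)]
  exact hρ.sum_le_tsum _ fun j _ => rho_nonneg hp hq j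

lemma absorptionProb_natCast_lt_one (k : ℕ) : absorptionProb p q k < 1 := by
  have hD := one_le_tsum_rho hp hq hρ
  have hS : 1 ≤ ∑ j ∈ Finset.range (k + 1), rho p q j := by
    simpa using Finset.single_le_sum (fun j _ => rho_nonneg hp hq j)
      (Finset.mem_range.2 k.succ_pos)
  rw [absorptionProb, show ((k : ℤ) + 1).toNat = k + 1 by omega, sub_lt_self_iff]
  positivity

lemma absorptionProb_natCast_eq (k : ℕ) :
    absorptionProb p q k = (∑' n, cseq p q (n + k)) / (1 + ∑' n, cseq p q n) := by
  -- `rho p q (n + 1)` is `cseq p q n` by definition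
  have hD : ∑' j, rho p q j = 1 + ∑' n, cseq p q n := hρ.tsum_eq_zero_add
  have hS : ∑ j ∈ Finset.range (k + 1), rho p q j + ∑' n, cseq p q (n + k) = ∑' j, rho p q j :=
    hρ.sum_add_tsum_nat_add (k + 1)
  have hD0 : ∑' j, rho p q j ≠ 0 := by linarith [one_le_tsum_rho hp hq hρ]
  rw [absorptionProb, show ((k : ℤ) + 1).toNat = k + 1 by omega, ← hD]
  rw [eq_div_iff hD0, sub_mul, one_mul, div_mul_cancel₀ _ hD0]
  linarith

end MinimalSolution

lemma IsBDHarmonic.eq_absorptionProb {p q : ℕ → ℝ} (hp : ∀ k, 0 < p k) (hq : ∀ k, 0 ≤ q k)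
    (hpq : ∀ k, p k + q k = 1) (hρ : Summable (rho p q)) {h : ℤ → ℝ}
    (hh : IsBDHarmonic p q h) (h_neg_one : h (-1) = 1) (h_nonneg : ∀ k : ℕ, 0 ≤ h k)
    (h_le : h 0 ≤ absorptionProb p q 0) (k : ℕ) : h k = absorptionProb p q k := by
  set D := ∑' j, rho p q j
  have hD : 1 ≤ D := one_le_tsum_rho (fun k => (hp k).le) hq hρ
  have hp' : ∀ k, p k ≠ 0 := fun k => (hp k).ne'
  have h_sub : ∀ k : ℕ, h k - h (k - 1) = rho p q k * (h 0 - 1) := by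
    simpa [h_neg_one] using hh.sub_eq hp' hpq
  suffices h0 : h 0 - 1 = -D⁻¹ by
    rw [eq_add_mul_sum_of_sub_eq h_sub, eq_add_mul_sum_of_sub_eq absorptionProb_sub,
      h_neg_one, absorptionProb_of_neg (by norm_num), h0]
  refine le_antisymm ?_ ?_
  · have : absorptionProb p q 0 = 1 - D⁻¹ := by simp [absorptionProb, D]
    linarith
  · -- letting `k → ∞` in `0 ≤ h k = 1 + (h 0 - 1) * ∑_{j ≤ k} ρ j`
    have hlim : Filter.Tendsto (fun k => 1 + (h 0 - 1) * ∑ j ∈ Finset.range (k + 1), rho p q j)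
        Filter.atTop (nhds (1 + (h 0 - 1) * D)) :=
      ((Filter.tendsto_add_atTop_iff_nat 1).2 hρ.hasSum.tendsto_sum_nat).const_mul _ |>.const_add _
    have h_lim_nonneg : 0 ≤ 1 + (h 0 - 1) * D := ge_of_tendsto' hlim fun k => by
      simpa [h_neg_one] using (eq_add_mul_sum_of_sub_eq h_sub k).symm.trans_ge (h_nonneg k)
    rw [neg_le, ← one_div, le_div_iff₀ (by linarith)]
    linarith

section Absorption

variable {p q : ℕ → ℝ} {μ : ℤ → Measure (ℕ → ℤ)}

lemma IsBDLaw.measure_eq_add (hp : ∀ k, 0 ≤ p k) (hq : ∀ k, 0 ≤ q k)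
    (hpq : ∀ k, p k + q k = 1) (hμ : ∀ i, IsProbabilityMeasure (μ i)) (hlaw : IsBDLaw p q μ)
    (k : ℕ) {A : Set (ℕ → ℤ)} (hA : MeasurableSet A) :
    μ k A = ENNReal.ofReal (p k) * μ (k + 1) (pathCons (k : ℤ) ⁻¹' A) +
      ENNReal.ofReal (q k) * μ (k - 1) (pathCons (k : ℤ) ⁻¹' A) := by
  conv_lhs => rw [hlaw.eq_add_map_pathCons hp hq hpq hμ k]
  simp [Measure.map_apply (measurable_pathCons _) hA]

lemma IsBDLaw.measure_neg_one_setOf_exists_eq_neg_one (hμ : ∀ i, IsProbabilityMeasure (μ i))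
    (hlaw : IsBDLaw p q μ) : μ (-1) {ω | ∃ n, ω n = -1} = 1 := by
  refine le_antisymm prob_le_one ?_
  calc 1 = μ (-1) (initialCylinder (fun _ => -1) 0) := by
        simp [hlaw.measure_initialCylinder]
    _ ≤ μ (-1) {ω | ∃ n, ω n = -1} := measure_mono fun ω hω => ⟨0, hω 0 le_rfl⟩

lemma IsBDLaw.isBDHarmonic_measure_setOf_exists_eq_neg_one (hp : ∀ k, 0 ≤ p k)
    (hq : ∀ k, 0 ≤ q k) (hpq : ∀ k, p k + q k = 1) (hμ : ∀ i, IsProbabilityMeasure (μ i))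
    (hlaw : IsBDLaw p q μ) :
    IsBDHarmonic p q fun i => (μ i {ω | ∃ n, ω n = -1}).toReal := by
  intro k
  dsimp only
  rw [hlaw.measure_eq_add hp hq hpq hμ k (measurableSet_setOf_exists_eq _),
    pathCons_preimage_setOf_exists_eq (by omega), ENNReal.toReal_add (by finiteness)
      (by finiteness), ENNReal.toReal_mul, ENNReal.toReal_mul, ENNReal.toReal_ofReal (hp k),
    ENNReal.toReal_ofReal (hq k)]

/-- The absorption probability is the minimal nonnegative solution of the harmonic equations. -/
lemma IsBDLaw.measure_setOf_exists_eq_neg_one_le (hp : ∀ k, 0 ≤ p k) (hq : ∀ k, 0 ≤ q k)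
    (hpq : ∀ k, p k + q k = 1) (hμ : ∀ i, IsProbabilityMeasure (μ i)) (hlaw : IsBDLaw p q μ)
    {g : ℤ → ℝ} (hg : IsBDHarmonic p q g) (hg_nonneg : ∀ i, 0 ≤ g i)
    (hg_neg : ∀ i < 0, 1 ≤ g i) (i : ℤ) :
    μ i {ω | ∃ n, ω n = -1} ≤ ENNReal.ofReal (g i) := by
  have h_neg : ∀ A, ∀ i < 0, μ i A ≤ ENNReal.ofReal (g i) := fun A i hi =>
    prob_le_one.trans (ENNReal.one_le_ofReal.2 (hg_neg i hi))
  have h_le : ∀ N i, μ i {ω | ∃ n ≤ N, ω n = -1} ≤ ENNReal.ofReal (g i) := by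
    intro N
    induction N with
    | zero =>
      intro i
      rcases lt_or_ge i 0 with hi | hi
      · exact h_neg _ i hi
      have hcyl : {ω : ℕ → ℤ | ∃ n ≤ 0, ω n = -1} = initialCylinder (fun _ => -1) 0 := by
        ext ω
        simp [initialCylinder]
      rw [hcyl, hlaw.measure_initialCylinder, if_neg (by omega)]
      simp
    | succ N ih =>
      intro i
      rcases lt_or_ge i 0 with hi | hi
      · exact h_neg _ i hi
      lift i to ℕ using hi with k
      rw [hlaw.measure_eq_add hp hq hpq hμ k (measurableSet_setOf_exists_le_eq _ _),
        pathCons_preimage_setOf_exists_le_eq (by omega), hg k,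
        ENNReal.ofReal_add (mul_nonneg (hp k) (hg_nonneg _)) (mul_nonneg (hq k) (hg_nonneg _)),
        ENNReal.ofReal_mul (hp k), ENNReal.ofReal_mul (hq k)]
      gcongr <;> apply ih
  rw [setOf_exists_eq_iUnion, Monotone.measure_iUnion]
  · exact iSup_le fun N => h_le N i
  · exact fun M N hMN ω ⟨n, hn, hωn⟩ => ⟨n, hn.trans hMN, hωn⟩

theorem IsBDLaw.toReal_measure_setOf_exists_eq_neg_one (hp : ∀ k, 0 < p k)
    (hq : ∀ k, 0 ≤ q k) (hpq : ∀ k, p k + q k = 1) (hμ : ∀ i, IsProbabilityMeasure (μ i))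
    (hlaw : IsBDLaw p q μ) (hρ : Summable (rho p q)) (k : ℕ) :
    (μ k {ω | ∃ n, ω n = -1}).toReal = absorptionProb p q k := by
  have hp₀ : ∀ k, 0 ≤ p k := fun k => (hp k).le
  have h_le := hlaw.measure_setOf_exists_eq_neg_one_le hp₀ hq hpq hμ
    (isBDHarmonic_absorptionProb (fun k => (hp k).ne') hpq) (absorptionProb_nonneg hp₀ hq hρ)
    (fun i hi => (absorptionProb_of_neg hi).ge) 0
  refine (hlaw.isBDHarmonic_measure_setOf_exists_eq_neg_one hp₀ hq hpq hμ).eq_absorptionProb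
    hp hq hpq hρ ?_ (fun _ => ENNReal.toReal_nonneg) ?_ k
  · simp [hlaw.measure_neg_one_setOf_exists_eq_neg_one hμ]
  · exact ENNReal.toReal_le_of_le_ofReal (absorptionProb_nonneg hp₀ hq hρ 0) h_le

end Absorption

theorem stmt3 (p q : ℕ → ℝ)
    (hp : ∀ i, p i ∈ Set.Ioo (0 : ℝ) 1) (hq : ∀ i, q i ∈ Set.Ioo (0 : ℝ) 1)
    (hpq : ∀ i, p i + q i = 1)
    (μ : ℤ → Measure (ℕ → ℤ)) (hμ : ∀ i, IsProbabilityMeasure (μ i))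
    (hlaw : IsBDLaw p q μ)
    (hc : Summable (cseq p q)) :
    ∀ i : ℕ,
      μ i {ω : ℕ → ℤ | ∃ n : ℕ, ω n = -1} =
        ENNReal.ofReal ((∑' n : ℕ, cseq p q (n + i)) / (1 + ∑' n : ℕ, cseq p q n)) ∧
      μ i {ω : ℕ → ℤ | ∃ n : ℕ, ω n = -1} < 1 := by
  intro i
  have hp₀ : ∀ k, 0 ≤ p k := fun k => (hp k).1.le
  have hq₀ : ∀ k, 0 ≤ q k := fun k => (hq k).1.le
  have hρ : Summable (rho p q) :=
    (summable_nat_add_iff 1).1 (hc : Summable fun n => rho p q (n + 1))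
  have hE : μ i {ω | ∃ n, ω n = -1} = ENNReal.ofReal (absorptionProb p q i) := by
    rw [← hlaw.toReal_measure_setOf_exists_eq_neg_one (fun k => (hp k).1) hq₀ hpq hμ hρ,
      ENNReal.ofReal_toReal (measure_ne_top _ _)]
  rw [hE, ENNReal.ofReal_lt_one, ← absorptionProb_natCast_eq hp₀ hq₀ hρ]
  exact ⟨rfl, absorptionProb_natCast_lt_one hp₀ hq₀ hρ i⟩
end

section
/- If the series ∑_{n=1}^{∞} b_n converges, then the reflecting birth–death chain is transient: for every starting state i ∈ ℕ, μ_i-almost surely, for every state j ∈ ℕ the set {n ∈ ℕ : ω_n = j} is finite (equivalently, almost surely ω_n → ∞). -/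
open MeasureTheory
open scoped ENNReal

/-- Transition probabilities of the reflecting birth-death chain on `ℕ`:
from `0` move to `1` with probability `1`; for `i ≥ 1`, move to `i+1` with
probability `p i` and to `i-1` with probability `q i`. -/
noncomputable def rfKernel (p q : ℕ → ℝ) : ℕ → ℕ → ℝ := fun i j =>
  if i = 0 then (if j = 1 then 1 else 0)
  else if j = i + 1 then p i else if j = i - 1 then q i else 0

/-- `μ i` is the law (on path space, obtained via Ionescu–Tulcea) of the reflecting
birth-death chain started at `i`, characterised by its finite-dimensional (cylinder)
distributions. -/
def IsRFLaw (p q : ℕ → ℝ) (μ : ℕ → Measure (ℕ → ℕ)) : Prop :=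
  ∀ (i n : ℕ) (f : ℕ → ℕ),
    μ i {ω : ℕ → ℕ | ∀ m ≤ n, ω m = f m} =
      ENNReal.ofReal ((if f 0 = i then (1 : ℝ) else 0) *
        ∏ m ∈ Finset.range n, rfKernel p q (f m) (f (m + 1)))

/-- `bseq p q n = ∏_{i=1}^{n} q_i / p_i` (so `bseq p q 0 = 1`). -/
noncomputable def bseq (p q : ℕ → ℝ) (n : ℕ) : ℝ :=
  ∏ i ∈ Finset.Icc 1 n, q i / p i

/-!
Put `T x = ∑_{k ≥ x} b_k`. Detailed balance `p_{x+1} b_{x+1} = q_{x+1} b_x` makes `T` harmonic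
for the chain away from `0`, so `h_j x = T (max x j)` is finite and harmonic except at `j`, where it
exceeds its one-step mean by `p_j b_j > 0`. Peeling off first steps,
the expected number of visits to `j` from `i` is then at most `h_j i / (p_j b_j) < ∞`, and
Borel–Cantelli shows that almost surely every state is visited only finitely often.
-/

open Finset

section MarkovChain

variable {α : Type*} {K : α → α → ℝ≥0∞}

variable (K) in
noncomputable def pathWeight {n : ℕ} (v : Fin (n + 1) → α) : ℝ≥0∞ :=
  ∏ m : Fin n, K (v m.castSucc) (v m.succ)

lemma pathWeight_cons {n : ℕ} (a : α) (u : Fin (n + 1) → α) :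
    pathWeight K (Fin.cons a u : Fin (n + 2) → α) = K a (u 0) * pathWeight K u := by
  simp [pathWeight, Fin.prod_univ_succ]

lemma prod_range_clamp_eq_pathWeight {n : ℕ} (v : Fin (n + 1) → α) :
    ∏ m ∈ range n, K (v (Fin.clamp m n)) (v (Fin.clamp (m + 1) n)) = pathWeight K v := by
  rw [pathWeight, ← Fin.prod_univ_eq_prod_range]
  refine prod_congr rfl fun m _ => ?_
  congr 2 <;> ext <;> simp [Fin.clamp]

variable [DecidableEq α]

variable (K) in
noncomputable def transitionPow : ℕ → α → α → ℝ≥0∞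
  | 0, i, j => if i = j then 1 else 0
  | n + 1, i, j => ∑' x, K i x * transitionPow n x j

lemma tsum_pathWeight (n : ℕ) (i j : α) :
    ∑' v : Fin (n + 1) → α, (if v 0 = i ∧ v (Fin.last n) = j then pathWeight K v else 0) =
      transitionPow K n i j := by
  induction n generalizing i with
  | zero =>
    rw [← (Equiv.funUnique (Fin 1) α).symm.tsum_eq, tsum_eq_single i fun x hx => by simp [hx]]
    simp [pathWeight, transitionPow]
  | succ n ih =>
    rw [← (Fin.consEquiv fun _ => α).tsum_eq, ENNReal.tsum_prod']
    simp only [Fin.consEquiv, Equiv.coe_fn_mk, Fin.cons_zero, ← Fin.succ_last, Fin.cons_succ,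
      pathWeight_cons]
    rw [tsum_eq_single i fun a ha => by simp [ha]]
    simp only [true_and, transitionPow, ← ih, ← ENNReal.tsum_mul_left]
    rw [ENNReal.tsum_comm]
    refine tsum_congr fun v => ?_
    rw [tsum_eq_single (v 0) fun x hx => by simp [Ne.symm hx]]
    simp only [true_and, mul_ite, mul_zero]

lemma measure_eval_eq_le_transitionPow [Countable α] {mΩ : MeasurableSpace (ℕ → α)}
    {ν : Measure (ℕ → α)} {i : α}
    (hν : ∀ n (f : ℕ → α), ν {ω | ∀ m ≤ n, ω m = f m} ≤
      (if f 0 = i then 1 else 0) * ∏ m ∈ range n, K (f m) (f (m + 1))) (n : ℕ) (j : α) :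
    ν {ω | ω n = j} ≤ transitionPow K n i j := by
  let cylinder (v : Fin (n + 1) → α) : Set (ℕ → α) :=
    {ω | ω n = j ∧ ∀ m ≤ n, ω m = v (Fin.clamp m n)}
  have hcover : {ω : ℕ → α | ω n = j} ⊆ ⋃ v, cylinder v := fun ω hω =>
    Set.mem_iUnion.2 ⟨fun m => ω m, hω, fun m hm => by simp [Fin.clamp, hm]⟩
  have hcylinder (v : Fin (n + 1) → α) :
      ν (cylinder v) ≤ if v 0 = i ∧ v (Fin.last n) = j then pathWeight K v else 0 := by
    by_cases hj : v (Fin.last n) = j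
    · calc ν (cylinder v) ≤ ν {ω | ∀ m ≤ n, ω m = v (Fin.clamp m n)} :=
            measure_mono fun ω hω => hω.2
        _ ≤ _ := hν n _
        _ = _ := by
          rw [prod_range_clamp_eq_pathWeight]
          simp [hj, Fin.clamp]
    · have hempty : cylinder v = ∅ := Set.eq_empty_iff_forall_notMem.2 fun ω ⟨hωn, hω⟩ =>
        hj (by rw [← Fin.ext (by simp [Fin.clamp] : (Fin.clamp n n : ℕ) = Fin.last n),
          ← hω n le_rfl, hωn])
      simp [hempty, hj]
  calc ν {ω | ω n = j} ≤ ∑' v, ν (cylinder v) :=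
        (measure_mono hcover).trans (measure_iUnion_le _)
    _ ≤ _ := ENNReal.tsum_le_tsum hcylinder
    _ = transitionPow K n i j := tsum_pathWeight n i j

lemma tsum_transitionPow_mul_le {h : α → ℝ≥0∞} {j : α} {c : ℝ≥0∞}
    (hsuper : ∀ x, ∑' y, K x y * h y + (if x = j then c else 0) ≤ h x) (i : α) :
    (∑' n, transitionPow K n i j) * c ≤ h i := by
  rw [← ENNReal.tsum_mul_right]
  refine ENNReal.tsum_le_of_sum_range_le fun N => ?_
  induction N generalizing i with
  | zero => simp
  | succ N ih =>
    calc ∑ n ∈ range (N + 1), transitionPow K n i j * c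
        = ∑' y, K i y * ∑ n ∈ range N, transitionPow K n y j * c + (if i = j then c else 0) := by
          rw [sum_range_succ']
          congr 1
          · simp_rw [mul_sum, Summable.tsum_finsetSum fun _ _ => ENNReal.summable, transitionPow,
              ← ENNReal.tsum_mul_right, mul_assoc]
          · simp [transitionPow]
      _ ≤ ∑' y, K i y * h y + (if i = j then c else 0) := by gcongr with y; exact ih y
      _ ≤ h i := hsuper i

end MarkovChain

lemma ae_forall_finite_setOf_eval_eq {α : Type*} [Countable α] {mΩ : MeasurableSpace (ℕ → α)}
    {ν : Measure (ℕ → α)} (h : ∀ j, ∑' n, ν {ω | ω n = j} ≠ ∞) :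
    ∀ᵐ ω ∂ν, ∀ j, {n | ω n = j}.Finite := by
  refine ae_all_iff.2 fun j => ?_
  filter_upwards [ae_eventually_notMem (h j)] with ω hω
  rw [← Nat.cofinite_eq_atTop, Filter.eventually_cofinite] at hω
  simpa using hω

section BirthDeath

variable {p q : ℕ → ℝ}

noncomputable def rfMean (p q g : ℕ → ℝ) (x : ℕ) : ℝ :=
  if x = 0 then g 1 else p x * g (x + 1) + q x * g (x - 1)

lemma rfMean_nonneg (hp : ∀ i, 1 ≤ i → 0 ≤ p i) (hq : ∀ i, 1 ≤ i → 0 ≤ q i) {g : ℕ → ℝ}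
    (hg : ∀ y, 0 ≤ g y) (x : ℕ) : 0 ≤ rfMean p q g x := by
  unfold rfMean
  split_ifs
  · exact hg 1
  · exact add_nonneg (mul_nonneg (hp x (by omega)) (hg _)) (mul_nonneg (hq x (by omega)) (hg _))

lemma rfKernel_nonneg (hp : ∀ i, 1 ≤ i → 0 ≤ p i) (hq : ∀ i, 1 ≤ i → 0 ≤ q i) (x y : ℕ) :
    0 ≤ rfKernel p q x y := by
  unfold rfKernel
  split_ifs <;> first | exact hp x (by omega) | exact hq x (by omega) | norm_num

lemma IsRFLaw.measure_cylinder {μ : ℕ → Measure (ℕ → ℕ)} (hlaw : IsRFLaw p q μ)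
    (hp : ∀ i, 1 ≤ i → 0 ≤ p i) (hq : ∀ i, 1 ≤ i → 0 ≤ q i) (i n : ℕ) (f : ℕ → ℕ) :
    μ i {ω | ∀ m ≤ n, ω m = f m} =
      (if f 0 = i then 1 else 0) *
        ∏ m ∈ range n, ENNReal.ofReal (rfKernel p q (f m) (f (m + 1))) := by
  rw [hlaw, ENNReal.ofReal_mul (by positivity),
    ENNReal.ofReal_prod_of_nonneg fun _ _ => rfKernel_nonneg hp hq _ _]
  split_ifs <;> simp

lemma tsum_rfKernel_mul (hp : ∀ i, 1 ≤ i → 0 ≤ p i) (hq : ∀ i, 1 ≤ i → 0 ≤ q i)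
    {g : ℕ → ℝ} (hg : ∀ y, 0 ≤ g y) (x : ℕ) :
    ∑' y, ENNReal.ofReal (rfKernel p q x y) * ENNReal.ofReal (g y) =
      ENNReal.ofReal (rfMean p q g x) := by
  rcases x with _ | z
  · rw [tsum_eq_single 1 fun y hy => by simp [rfKernel, hy]]
    simp [rfKernel, rfMean]
  · have hterm (y : ℕ) : ENNReal.ofReal (rfKernel p q (z + 1) y) * ENNReal.ofReal (g y) =
        (if y = z + 2 then ENNReal.ofReal (p (z + 1) * g (z + 2)) else 0) +
          (if y = z then ENNReal.ofReal (q (z + 1) * g z) else 0) := by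
      unfold rfKernel
      by_cases h2 : y = z + 2
      · simp [h2, ENNReal.ofReal_mul (hp (z + 1) (by omega))]
      by_cases h0 : y = z
      · simp [h0, ENNReal.ofReal_mul (hq (z + 1) (by omega)), show z ≠ z + 1 + 1 by omega]
      simp [h0, h2]
    simp_rw [hterm]
    rw [ENNReal.tsum_add, tsum_ite_eq, tsum_ite_eq, ← ENNReal.ofReal_add
      (mul_nonneg (hp _ (by omega)) (hg _)) (mul_nonneg (hq _ (by omega)) (hg _))]
    simp [rfMean]

lemma pos_of_one_le_imp_pos (hp : ∀ i, 1 ≤ i → 0 < p i) (hp0 : p 0 = 1) (j : ℕ) : 0 < p j := by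
  rcases j with _ | j
  · simp [hp0]
  · exact hp _ (by omega)

lemma bseq_zero : bseq p q 0 = 1 := by simp [bseq]

lemma bseq_pos (hp : ∀ i, 1 ≤ i → 0 < p i) (hq : ∀ i, 1 ≤ i → 0 < q i) (n : ℕ) :
    0 < bseq p q n :=
  prod_pos fun i hi => div_pos (hq i (mem_Icc.1 hi).1) (hp i (mem_Icc.1 hi).1)

lemma mul_bseq_succ {n : ℕ} (hp : p (n + 1) ≠ 0) :
    p (n + 1) * bseq p q (n + 1) = q (n + 1) * bseq p q n := by
  rw [bseq, prod_Icc_succ_top (by omega), ← bseq]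
  field_simp

noncomputable def bseqTail (p q : ℕ → ℝ) (x : ℕ) : ℝ := ∑' k, bseq p q (k + x)

lemma bseqTail_nonneg (hp : ∀ i, 1 ≤ i → 0 < p i) (hq : ∀ i, 1 ≤ i → 0 < q i) (x : ℕ) :
    0 ≤ bseqTail p q x :=
  tsum_nonneg fun _ => (bseq_pos hp hq _).le

lemma bseqTail_eq_add (hb : Summable (bseq p q)) (x : ℕ) :
    bseqTail p q x = bseq p q x + bseqTail p q (x + 1) := by
  rw [bseqTail, ((summable_nat_add_iff x).2 hb).tsum_eq_zero_add, bseqTail, zero_add]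
  simp only [add_right_comm _ 1 x, add_assoc]

lemma rfMean_bseqTail (hp : ∀ i, 1 ≤ i → 0 < p i) (hpq : ∀ i, 1 ≤ i → p i + q i = 1)
    (hb : Summable (bseq p q)) (x : ℕ) :
    rfMean p q (bseqTail p q) (x + 1) = bseqTail p q (x + 1) := by
  simp only [rfMean, Nat.add_sub_cancel, add_assoc, Nat.reduceAdd, if_neg x.succ_ne_zero]
  linear_combination q (x + 1) * bseqTail_eq_add hb x - p (x + 1) * bseqTail_eq_add hb (x + 1)
    - mul_bseq_succ (q := q) (hp (x + 1) (by omega)).ne'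
    + bseqTail p q (x + 1) * hpq (x + 1) (by omega)

lemma rfMean_bseqTail_max_add (hp : ∀ i, 1 ≤ i → 0 < p i) (hpq : ∀ i, 1 ≤ i → p i + q i = 1)
    (hp0 : p 0 = 1) (hb : Summable (bseq p q)) (j x : ℕ) :
    rfMean p q (fun y => bseqTail p q (max y j)) x + (if x = j then p j * bseq p q j else 0) =
      bseqTail p q (max x j) := by
  rcases x with _ | z
  · rcases j.eq_zero_or_pos with rfl | hj
    · simp [rfMean, hp0, bseq_zero, bseqTail_eq_add hb 0, add_comm]
    · simp [rfMean, hj.ne, max_eq_right (show 1 ≤ j from hj)]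
  rcases lt_trichotomy (z + 1) j with hlt | rfl | hgt
  · simp [rfMean, hlt.ne, max_eq_right (show z + 1 + 1 ≤ j from hlt), max_eq_right hlt.le,
      show z ≤ j by omega]
    linear_combination bseqTail p q j * hpq (z + 1) (by omega)
  · simp [rfMean]
    linear_combination -p (z + 1) * bseqTail_eq_add hb (z + 1)
      + bseqTail p q (z + 1) * hpq (z + 1) (by omega)
  · have hmax : ∀ y, z ≤ y → max y j = y := fun y hy => max_eq_left (by omega)
    simp only [rfMean, if_neg hgt.ne', add_zero, hmax _ le_rfl, hmax _ (Nat.le_succ z),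
      hmax (z + 1 + 1) (by omega), Nat.add_sub_cancel]
    simpa [rfMean] using rfMean_bseqTail hp hpq hb z

lemma tsum_rfKernel_mul_bseqTail_max_add (hp : ∀ i, 1 ≤ i → 0 < p i)
    (hq : ∀ i, 1 ≤ i → 0 < q i) (hpq : ∀ i, 1 ≤ i → p i + q i = 1) (hp0 : p 0 = 1)
    (hb : Summable (bseq p q)) (j x : ℕ) :
    ∑' y, ENNReal.ofReal (rfKernel p q x y) * ENNReal.ofReal (bseqTail p q (max y j)) +
        (if x = j then ENNReal.ofReal (p j * bseq p q j) else 0) =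
      ENNReal.ofReal (bseqTail p q (max x j)) := by
  have hp' : ∀ i, 1 ≤ i → 0 ≤ p i := fun i hi => (hp i hi).le
  have hq' : ∀ i, 1 ≤ i → 0 ≤ q i := fun i hi => (hq i hi).le
  have hT : ∀ y, 0 ≤ bseqTail p q (max y j) := fun _ => bseqTail_nonneg hp hq _
  have hdefect : (if x = j then ENNReal.ofReal (p j * bseq p q j) else 0) =
      ENNReal.ofReal (if x = j then p j * bseq p q j else 0) := by
    split_ifs <;> simp
  rw [tsum_rfKernel_mul hp' hq' hT, hdefect,
    ← ENNReal.ofReal_add (rfMean_nonneg hp' hq' hT x), rfMean_bseqTail_max_add hp hpq hp0 hb]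
  split_ifs
  · exact (mul_pos (pos_of_one_le_imp_pos hp hp0 j) (bseq_pos hp hq j)).le
  · exact le_rfl

end BirthDeath

theorem stmt7 (p q : ℕ → ℝ)
    (hp : ∀ i, 1 ≤ i → p i ∈ Set.Ioo (0 : ℝ) 1) (hq : ∀ i, 1 ≤ i → q i ∈ Set.Ioo (0 : ℝ) 1)
    (hpq : ∀ i, 1 ≤ i → p i + q i = 1) (hp0 : p 0 = 1)
    (μ : ℕ → Measure (ℕ → ℕ)) (hμ : ∀ i, IsProbabilityMeasure (μ i))
    (hlaw : IsRFLaw p q μ)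
    (hb : Summable (fun n : ℕ => bseq p q (n + 1))) :
    ∀ i : ℕ, μ i {ω : ℕ → ℕ | ∀ j : ℕ, {n : ℕ | ω n = j}.Finite} = 1 := by
  intro i
  have hp' : ∀ i, 1 ≤ i → 0 < p i := fun i hi => (hp i hi).1
  have hq' : ∀ i, 1 ≤ i → 0 < q i := fun i hi => (hq i hi).1
  have hcylinder := hlaw.measure_cylinder (fun i hi => (hp' i hi).le) (fun i hi => (hq' i hi).le)
  have hvisits (j : ℕ) : ∑' n, μ i {ω | ω n = j} ≠ ∞ := by
    have hdefect : ENNReal.ofReal (p j * bseq p q j) ≠ 0 :=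
      (ENNReal.ofReal_pos.2 (mul_pos (pos_of_one_le_imp_pos hp' hp0 j) (bseq_pos hp' hq' j))).ne'
    have hgreen := tsum_transitionPow_mul_le (fun x => (tsum_rfKernel_mul_bseqTail_max_add
      hp' hq' hpq hp0 ((summable_nat_add_iff 1).1 hb) j x).le) i
    refine ne_top_of_le_ne_top ?_ (ENNReal.tsum_le_tsum fun n =>
      measure_eval_eq_le_transitionPow (K := fun x y => ENNReal.ofReal (rfKernel p q x y))
        (fun n f => (hcylinder i n f).le) n j)
    exact (ENNReal.lt_top_of_mul_ne_top_left (ne_top_of_le_ne_top ENNReal.ofReal_ne_top hgreen)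
      hdefect).ne
  have := hμ i
  exact (measure_congr (ae_eq_univ.2 (ae_iff.1 (ae_forall_finite_setOf_eval_eq hvisits)))).trans
    measure_univ
end

section
/- Let β ∈ ℝ with β ∉ {0, ln 2}, let W be a real random variable on a probability space (Ω, P) whose law has density f_β(x) = β·e^{βx}/(e^β − 1) on [0,1] (and 0 elsewhere) with respect to Lebesgue measure, and let W_0 be a real random variable, independent of W, taking values in {0} ∪ {2^k : k ∈ ℤ}; write π_{2^k} = P(W_0 = 2^k). Set R = W_0 · 2^{−W}. If S = ∑_{k∈ℤ} 2^k π_{2^k} < ∞, then R is integrable and E[R] = S · β(e^β − 2) / (2(e^β − 1)(β − ln 2)). -/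
/-!
By independence, `E[W₀ 2^{-W}] = E[W₀] E[2^{-W}]`. As `W₀` only takes the values `0` and `2^k`,
`E[W₀] = ∑ₖ 2^k P(W₀ = 2^k) = S`, and `E[2^{-W}] = β/(e^β - 1) ∫₀¹ e^{(β - ln 2) x} dx`, an elementary
exponential integral since `β ≠ ln 2`.
-/

open MeasureTheory
open scoped ENNReal

/-- The density `f_β`: for `β ≠ 0`, `f_β(x) = β e^{βx}/(e^β - 1)` on `[0,1]` and `0`
elsewhere; `f_0` is the indicator of `[0,1]`. -/
noncomputable def fdens (β : ℝ) : ℝ → ℝ :=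
  (Set.Icc (0 : ℝ) 1).indicator
    (fun x => if β = 0 then 1 else β * Real.exp (β * x) / (Real.exp β - 1))

/-- The (complementary) cumulative distribution function `G_β`. -/
noncomputable def Gfun (β : ℝ) (x : ℝ) : ℝ :=
  if x ≤ 1 / 2 then 1
  else if x < 1 then
    (if β = 0 then -Real.log x / Real.log 2
     else (x ^ (-β / Real.log 2) - 1) / (Real.exp β - 1))
  else 0

open ProbabilityTheory Real

section CountablyValued

variable {Ω ι : Type*} {v : ι → ℝ} {X : Ω → ℝ}

lemma ofReal_eq_tsum_indicator_of_eq_zero_or_mem_range (hv : Function.Injective v)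
    (hval : ∀ ω, X ω = 0 ∨ ∃ k, X ω = v k) (ω : Ω) :
    ENNReal.ofReal (X ω) = ∑' k, {ω | X ω = v k}.indicator (fun _ => ENNReal.ofReal (v k)) ω := by
  rcases hval ω with hzero | ⟨k, hk⟩
  · rw [hzero, ENNReal.ofReal_zero, eq_comm, ENNReal.tsum_eq_zero]
    intro j
    by_cases hj : X ω = v j
    · simp [Set.indicator_of_mem, hj, ← hzero]
    · exact Set.indicator_of_notMem hj _
  · rw [tsum_eq_single k fun j hj =>
        Set.indicator_of_notMem (fun hj' => hj (hv (hj'.symm.trans hk))) _,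
      Set.indicator_of_mem (show ω ∈ {ω | X ω = v k} from hk), hk]

variable [MeasurableSpace Ω] {μ : Measure Ω} [Countable ι]

lemma lintegral_ofReal_eq_tsum_of_eq_zero_or_mem_range (hv : Function.Injective v)
    (hX : Measurable X) (hval : ∀ ω, X ω = 0 ∨ ∃ k, X ω = v k) :
    ∫⁻ ω, ENNReal.ofReal (X ω) ∂μ = ∑' k, ENNReal.ofReal (v k) * μ {ω | X ω = v k} := by
  have hlevel (k : ι) : MeasurableSet {ω | X ω = v k} := hX (measurableSet_singleton _)
  simp_rw [ofReal_eq_tsum_indicator_of_eq_zero_or_mem_range hv hval,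
    lintegral_tsum fun k => (measurable_const.indicator (hlevel k)).aemeasurable,
    lintegral_indicator_const (hlevel _)]

lemma integrable_and_integral_eq_tsum_of_eq_zero_or_mem_range (hv : Function.Injective v)
    (hv_nonneg : ∀ k, 0 ≤ v k) (hX : Measurable X) (hval : ∀ ω, X ω = 0 ∨ ∃ k, X ω = v k)
    (hfin : ∑' k, ENNReal.ofReal (v k) * μ {ω | X ω = v k} ≠ ∞) :
    Integrable X μ ∧ ∫ ω, X ω ∂μ = (∑' k, ENNReal.ofReal (v k) * μ {ω | X ω = v k}).toReal := by
  have hX_nonneg : 0 ≤ᵐ[μ] X := ae_of_all _ fun ω => by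
    rcases hval ω with h | ⟨k, h⟩ <;> simp [h, hv_nonneg]
  rw [← lintegral_ofReal_eq_tsum_of_eq_zero_or_mem_range hv hX hval] at hfin ⊢
  exact ⟨⟨hX.aestronglyMeasurable, (hasFiniteIntegral_iff_ofReal hX_nonneg).mpr hfin.lt_top⟩,
    integral_eq_lintegral_of_nonneg_ae hX_nonneg hX.aestronglyMeasurable⟩

end CountablyValued

lemma fdens_nonneg (β x : ℝ) : 0 ≤ fdens β x := by
  refine Set.indicator_nonneg (fun y _ => ?_) x
  split_ifs with hβ
  · exact zero_le_one
  · rcases lt_or_gt_of_ne hβ with hneg | hpos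
    · exact div_nonneg_of_nonpos (mul_nonpos_of_nonpos_of_nonneg hneg.le (exp_pos _).le)
        (sub_nonpos.mpr (exp_le_one_iff.mpr hneg.le))
    · exact div_nonneg (by positivity) (sub_nonneg.mpr (one_le_exp hpos.le))

lemma measurable_fdens (β : ℝ) : Measurable (fdens β) :=
  Measurable.indicator (by split_ifs <;> fun_prop) measurableSet_Icc

lemma ae_mem_Icc_of_map_eq_withDensity_fdens {Ω : Type*} [MeasurableSpace Ω] {P : Measure Ω}
    {β : ℝ} {W : Ω → ℝ} (hW : Measurable W)
    (hlaw : P.map W = volume.withDensity (fun x => ENNReal.ofReal (fdens β x))) :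
    ∀ᵐ ω ∂P, W ω ∈ Set.Icc (0 : ℝ) 1 := by
  refine ae_of_ae_map hW.aemeasurable ?_
  rw [hlaw, ae_withDensity_iff (measurable_fdens β).ennreal_ofReal]
  refine ae_of_all _ fun x hx => ?_
  by_contra hx'
  simp [fdens, Set.indicator_of_notMem hx'] at hx

lemma integral_withDensity_fdens {β : ℝ} (hβ : β ≠ 0) (g : ℝ → ℝ) :
    ∫ x, g x ∂volume.withDensity (fun x => ENNReal.ofReal (fdens β x)) =
      ∫ x in (0 : ℝ)..1, β * exp (β * x) / (exp β - 1) * g x := by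
  rw [integral_withDensity_eq_integral_toReal_smul (measurable_fdens β).ennreal_ofReal
      (ae_of_all _ fun _ => ENNReal.ofReal_lt_top),
    intervalIntegral.integral_of_le zero_le_one, ← integral_Icc_eq_integral_Ioc,
    ← integral_indicator measurableSet_Icc]
  congr 1 with x
  rw [ENNReal.toReal_ofReal (fdens_nonneg β x), smul_eq_mul, fdens]
  simp only [if_neg hβ]
  exact (Set.indicator_mul_left _ _ _).symm

lemma integral_exp_mul {a b c : ℝ} (hc : c ≠ 0) :
    ∫ x in a..b, exp (c * x) = (exp (c * b) - exp (c * a)) / c := by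
  rw [intervalIntegral.integral_comp_mul_left exp hc, integral_exp, smul_eq_mul, inv_mul_eq_div]

lemma integral_two_rpow_neg_withDensity_fdens {β : ℝ} (hβ0 : β ≠ 0) (hβ2 : β ≠ log 2) :
    ∫ x, (2 : ℝ) ^ (-x) ∂volume.withDensity (fun x => ENNReal.ofReal (fdens β x)) =
      β * (exp β - 2) / (2 * (exp β - 1) * (β - log 2)) := by
  have hc : β - log 2 ≠ 0 := sub_ne_zero.mpr hβ2
  have hintegrand (x : ℝ) : β * exp (β * x) / (exp β - 1) * (2 : ℝ) ^ (-x) =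
      β / (exp β - 1) * exp ((β - log 2) * x) := by
    rw [rpow_def_of_pos two_pos, sub_mul, exp_sub, mul_neg, exp_neg]
    ring
  simp_rw [integral_withDensity_fdens hβ0, hintegrand, intervalIntegral.integral_const_mul,
    integral_exp_mul hc, mul_one, mul_zero, exp_zero, exp_sub, exp_log two_pos]
  field_simp

theorem stmt14 {Ω : Type*} [MeasurableSpace Ω] (P : Measure Ω) [IsProbabilityMeasure P]
    (β : ℝ) (hβ0 : β ≠ 0) (hβ2 : β ≠ Real.log 2)
    (W W₀ : Ω → ℝ) (hW : Measurable W) (hW₀ : Measurable W₀)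
    (hlaw : P.map W = volume.withDensity (fun x => ENNReal.ofReal (fdens β x)))
    (hindep : ProbabilityTheory.IndepFun W W₀ P)
    (hval : ∀ ω, W₀ ω = 0 ∨ ∃ k : ℤ, W₀ ω = (2 : ℝ) ^ k)
    (hS : (∑' k : ℤ, ENNReal.ofReal ((2 : ℝ) ^ k) * P {ω | W₀ ω = (2 : ℝ) ^ k}) ≠ ⊤) :
    Integrable (fun ω => W₀ ω * (2 : ℝ) ^ (-W ω)) P ∧
      ∫ ω, W₀ ω * (2 : ℝ) ^ (-W ω) ∂P =
        (∑' k : ℤ, ENNReal.ofReal ((2 : ℝ) ^ k) * P {ω | W₀ ω = (2 : ℝ) ^ k}).toReal *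
          (β * (Real.exp β - 2) / (2 * (Real.exp β - 1) * (β - Real.log 2))) := by
  obtain ⟨hW₀_int, hW₀_integral⟩ := integrable_and_integral_eq_tsum_of_eq_zero_or_mem_range
    (zpow_right_injective₀ two_pos (by norm_num)) (fun k => by positivity) hW₀ hval hS
  have hscale : Measurable fun w : ℝ => (2 : ℝ) ^ (-w) := by fun_prop
  have hscale_int : Integrable (fun ω => (2 : ℝ) ^ (-W ω)) P := by
    refine (integrable_const (1 : ℝ)).mono' (hscale.comp hW).aestronglyMeasurable ?_
    filter_upwards [ae_mem_Icc_of_map_eq_withDensity_fdens hW hlaw] with ω hω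
    rw [norm_of_nonneg (by positivity)]
    exact rpow_le_one_of_one_le_of_nonpos one_le_two (neg_nonpos.mpr hω.1)
  have hscale_integral : ∫ ω, (2 : ℝ) ^ (-W ω) ∂P =
      β * (exp β - 2) / (2 * (exp β - 1) * (β - log 2)) := by
    rw [← integral_map hW.aemeasurable hscale.aestronglyMeasurable, hlaw,
      integral_two_rpow_neg_withDensity_fdens hβ0 hβ2]
  have hindep_scale : IndepFun W₀ (fun ω => (2 : ℝ) ^ (-W ω)) P :=
    hindep.symm.comp measurable_id hscale
  refine ⟨hindep_scale.integrable_mul hW₀_int hscale_int, ?_⟩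
  rw [← hW₀_integral, ← hscale_integral]
  exact hindep_scale.integral_mul_eq_mul_integral hW₀_int.aestronglyMeasurable
    hscale_int.aestronglyMeasurable
end
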